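/- arXiv:math/0006032 — 4 statements merged into one kernel-verified Lean document; each statement's English description precedes it below -/
import Mathlib

section
/- Let ξ, η be conjugate harmonic coordinates flattening an analytic arc-length parameterized curve Γ (so that ξ restricted to Γ is the arc-length and η = 0 on Γ), with inverse Ψ = (x̃,ỹ), and let γ(ξ,η) := 1/|∇ξ(Ψ(ξ,η))|. Then ∂_η(|∇ξ(Ψ)|²)(ξ,0) = -2·curv Γ(ξ), and consequently ∂_η γ(ξ,0) = curv Γ(ξ). -/
/-!
Write `u = (∂_ξ x̃)² + (∂_ξ ỹ)²`, so that `F = u⁻¹`, `γ = √u` and `u = 1` on `Γ`. The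
Cauchy–Riemann equations hold on the open set `V`, so they may be differentiated in `ξ`; together
with the symmetry of second derivatives they give `∂_η ∂_ξ x̃ = ∂_ξ ∂_η x̃ = -∂²_ξξ ỹ` and
`∂_η ∂_ξ ỹ = ∂²_ξξ x̃`, hence `∂_η u = 2 curv Γ`. The chain rule at `u = 1` then gives
`∂_η F = -2 curv Γ` and `∂_η γ = curv Γ`.
-/

open Real Set

noncomputable def pdx (f : ℝ → ℝ → ℝ) (x y : ℝ) : ℝ := deriv (fun a => f a y) x

noncomputable def pdy (f : ℝ → ℝ → ℝ) (x y : ℝ) : ℝ := deriv (fun b => f x b) y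

open Function Topology

section PartialDerivatives

variable {f : ℝ → ℝ → ℝ}

theorem hasDerivAt_fderiv_uncurry_left {x y : ℝ} (hf : DifferentiableAt ℝ (uncurry f) (x, y)) :
    HasDerivAt (fun s => f s y) (fderiv ℝ (uncurry f) (x, y) (1, 0)) x :=
  hf.hasFDerivAt.comp_hasDerivAt (f := fun s => (s, y)) x
    ((hasDerivAt_id x).prodMk (hasDerivAt_const x y))

theorem hasDerivAt_fderiv_uncurry_right {x y : ℝ} (hf : DifferentiableAt ℝ (uncurry f) (x, y)) :
    HasDerivAt (fun t => f x t) (fderiv ℝ (uncurry f) (x, y) (0, 1)) y :=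
  hf.hasFDerivAt.comp_hasDerivAt (f := fun t => (x, t)) y
    ((hasDerivAt_const y x).prodMk (hasDerivAt_id y))

theorem pdx_eq_fderiv {x y : ℝ} (hf : DifferentiableAt ℝ (uncurry f) (x, y)) :
    pdx f x y = fderiv ℝ (uncurry f) (x, y) (1, 0) :=
  (hasDerivAt_fderiv_uncurry_left hf).deriv

theorem pdy_eq_fderiv {x y : ℝ} (hf : DifferentiableAt ℝ (uncurry f) (x, y)) :
    pdy f x y = fderiv ℝ (uncurry f) (x, y) (0, 1) :=
  (hasDerivAt_fderiv_uncurry_right hf).deriv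

theorem uncurry_pdx_eq_fderiv (hf : Differentiable ℝ (uncurry f)) :
    uncurry (pdx f) = fun p => fderiv ℝ (uncurry f) p (1, 0) :=
  funext fun p => pdx_eq_fderiv (hf p)

theorem uncurry_pdy_eq_fderiv (hf : Differentiable ℝ (uncurry f)) :
    uncurry (pdy f) = fun p => fderiv ℝ (uncurry f) p (0, 1) :=
  funext fun p => pdy_eq_fderiv (hf p)

theorem ContDiff.uncurry_pdx {n : WithTop ℕ∞} (hf : ContDiff ℝ (n + 1) (uncurry f)) :
    ContDiff ℝ n (uncurry (pdx f)) := by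
  rw [uncurry_pdx_eq_fderiv (hf.differentiable (by simp))]
  exact (hf.fderiv_right le_rfl).clm_apply contDiff_const

theorem ContDiff.uncurry_pdy {n : WithTop ℕ∞} (hf : ContDiff ℝ (n + 1) (uncurry f)) :
    ContDiff ℝ n (uncurry (pdy f)) := by
  rw [uncurry_pdy_eq_fderiv (hf.differentiable (by simp))]
  exact (hf.fderiv_right le_rfl).clm_apply contDiff_const

theorem hasDerivAt_pdy {x y : ℝ} (hf : DifferentiableAt ℝ (uncurry f) (x, y)) :
    HasDerivAt (fun t => f x t) (pdy f x y) y :=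
  (hasDerivAt_fderiv_uncurry_right hf).differentiableAt.hasDerivAt

theorem pdy_pdx_eq_pdx_pdy (hf : ContDiff ℝ 2 (uncurry f)) (x y : ℝ) :
    pdy (pdx f) x y = pdx (pdy f) x y := by
  have hf1 : Differentiable ℝ (uncurry f) := hf.differentiable (by simp)
  have hf' : ContDiff ℝ (1 + 1) (uncurry f) := hf
  have hD2 : DifferentiableAt ℝ (fderiv ℝ (uncurry f)) (x, y) :=
    (hf.fderiv_right (m := 1) (by norm_num)).differentiable one_ne_zero _
  have hsymm := (hf.contDiffAt (x := (x, y))).isSymmSndFDerivAt (by simp)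
  rw [pdy_eq_fderiv ((hf'.uncurry_pdx.differentiable one_ne_zero) _),
    pdx_eq_fderiv ((hf'.uncurry_pdy.differentiable one_ne_zero) _), uncurry_pdx_eq_fderiv hf1,
    uncurry_pdy_eq_fderiv hf1, fderiv_clm_apply hD2 (differentiableAt_const _),
    fderiv_clm_apply hD2 (differentiableAt_const _)]
  simpa using hsymm (0, 1) (1, 0)

end PartialDerivatives

theorem pdx_congr_of_isOpen {f g : ℝ → ℝ → ℝ} {V : Set (ℝ × ℝ)} (hV : IsOpen V)
    (hfg : ∀ a b, (a, b) ∈ V → f a b = g a b) {a b : ℝ} (hab : (a, b) ∈ V) :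
    pdx f a b = pdx g a b := by
  have hnear : ∀ᶠ s in 𝓝 a, (s, b) ∈ V :=
    (continuous_id.prodMk continuous_const).continuousAt.preimage_mem_nhds (hV.mem_nhds hab)
  exact Filter.EventuallyEq.deriv_eq (hnear.mono fun s hs => hfg s b hs)

section CauchyRiemann

variable {V : Set (ℝ × ℝ)} {xt yt : ℝ → ℝ → ℝ} {a b : ℝ}

theorem pdy_pdx_eq_neg_pdx_pdx_of_cauchyRiemann (hV : IsOpen V) (hxt : ContDiff ℝ 2 (uncurry xt))
    (hCR : ∀ a b, (a, b) ∈ V → pdy xt a b = -pdx yt a b) (hab : (a, b) ∈ V) :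
    pdy (pdx xt) a b = -pdx (pdx yt) a b := by
  rw [pdy_pdx_eq_pdx_pdy hxt, pdx_congr_of_isOpen hV hCR hab]
  exact deriv.fun_neg

theorem pdy_pdx_eq_pdx_pdx_of_cauchyRiemann (hV : IsOpen V) (hyt : ContDiff ℝ 2 (uncurry yt))
    (hCR : ∀ a b, (a, b) ∈ V → pdx xt a b = pdy yt a b) (hab : (a, b) ∈ V) :
    pdy (pdx yt) a b = pdx (pdx xt) a b := by
  rw [pdy_pdx_eq_pdx_pdy hyt, pdx_congr_of_isOpen hV (fun a b h => (hCR a b h).symm) hab]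

theorem hasDerivAt_pdx_sq_add_pdx_sq_of_cauchyRiemann (hV : IsOpen V)
    (hxt : ContDiff ℝ 2 (uncurry xt)) (hyt : ContDiff ℝ 2 (uncurry yt))
    (hCR1 : ∀ a b, (a, b) ∈ V → pdx xt a b = pdy yt a b)
    (hCR2 : ∀ a b, (a, b) ∈ V → pdy xt a b = -pdx yt a b) (hab : (a, b) ∈ V) :
    HasDerivAt (fun t => pdx xt a t ^ 2 + pdx yt a t ^ 2)
      (2 * (-pdx xt a b * pdx (pdx yt) a b + pdx yt a b * pdx (pdx xt) a b)) b := by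
  have hX : Differentiable ℝ (uncurry (pdx xt)) :=
    (ContDiff.uncurry_pdx (n := 1) hxt).differentiable one_ne_zero
  have hY : Differentiable ℝ (uncurry (pdx yt)) :=
    (ContDiff.uncurry_pdx (n := 1) hyt).differentiable one_ne_zero
  refine (((hasDerivAt_pdy (hX (a, b))).pow 2).add
    ((hasDerivAt_pdy (hY (a, b))).pow 2)).congr_deriv ?_
  rw [pdy_pdx_eq_neg_pdx_pdx_of_cauchyRiemann hV hxt hCR2 hab,
    pdy_pdx_eq_pdx_pdx_of_cauchyRiemann hV hyt hCR1 hab]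
  ring

end CauchyRiemann

/-- in conformal coordinates `(ξ,η)` flattening an arc-length
parameterized curve `Γ` (so `Ψ(·,0)` parameterizes `Γ` by arc-length), with
`|∇ξ(Ψ)|² = ((∂_ξ x̃)² + (∂_ξ ỹ)²)⁻¹` and `γ = 1/|∇ξ(Ψ)|`, one has
`∂_η(|∇ξ(Ψ)|²)(ξ,0) = -2 curv Γ(ξ)` and `∂_η γ(ξ,0) = curv Γ(ξ)`. -/
theorem stmt5 (V : Set (ℝ × ℝ)) (hV : IsOpen V)
    (xt yt : ℝ → ℝ → ℝ)
    (hxt : ContDiff ℝ 3 (fun p : ℝ × ℝ => xt p.1 p.2))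
    (hyt : ContDiff ℝ 3 (fun p : ℝ × ℝ => yt p.1 p.2))
    (hCR1 : ∀ a b : ℝ, (a, b) ∈ V → pdx xt a b = pdy yt a b)
    (hCR2 : ∀ a b : ℝ, (a, b) ∈ V → pdy xt a b = - pdx yt a b)
    (hnorm : ∀ a : ℝ, (a, 0) ∈ V → (pdx xt a 0) ^ 2 + (pdx yt a 0) ^ 2 = 1)
    (κ : ℝ → ℝ)
    (hκ : ∀ a : ℝ, (a, 0) ∈ V →
      κ a = - pdx xt a 0 * pdx (fun s t => pdx yt s t) a 0
            + pdx yt a 0 * pdx (fun s t => pdx xt s t) a 0)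
    (F γ : ℝ → ℝ → ℝ)
    (hF : ∀ a b : ℝ, F a b = (((pdx xt a b) ^ 2 + (pdx yt a b) ^ 2))⁻¹)
    (hγ : ∀ a b : ℝ, γ a b = Real.sqrt ((pdx xt a b) ^ 2 + (pdx yt a b) ^ 2)) :
    ∀ a : ℝ, (a, 0) ∈ V →
      pdy F a 0 = -2 * κ a ∧ pdy γ a 0 = κ a := by
  intro a ha
  have hu := hasDerivAt_pdx_sq_add_pdx_sq_of_cauchyRiemann hV (hxt.of_le (by norm_num))
    (hyt.of_le (by norm_num)) hCR1 hCR2 ha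
  rw [← hκ a ha] at hu
  have hu_one := hnorm a ha
  have hu_ne : pdx xt a 0 ^ 2 + pdx yt a 0 ^ 2 ≠ 0 := by rw [hu_one]; exact one_ne_zero
  constructor
  · simp only [pdy, hF]
    rw [(hu.fun_inv hu_ne).deriv, hu_one]
    ring
  · simp only [pdy, hγ]
    rw [(hu.sqrt hu_ne).deriv, hu_one, Real.sqrt_one]
    ring
end

section
/- In the setting of the previous statement, ∂²_{ηη}(|∇ξ(Ψ)|²)(ξ,0) = 4[curv Γ(ξ)]², and consequently ∂²_{ηη}γ(ξ,0) = [curv Γ(ξ)]². -/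
/-!
Write `f = x̃ + i ỹ`, holomorphic in `ξ + i η`, and `N = |f'|² = (∂_ξ x̃)² + (∂_ξ ỹ)²`.
Since `f'` is again holomorphic, its components are harmonic, and expanding gives
`Δ N = 4 |f''|²`. Along the axis `N ≡ 1`, so `∂_ξ N = ∂²_ξξ N = 0` there; hence
`∂²_ηη N = 4 |f''|²`, which equals `4 κ²` by Lagrange's identity, as `|f'| = 1` and `f' ⊥ f''`.
The Cauchy–Riemann equations for `f'` give `∂_η N = 2 κ`. Finally `|∇ξ(Ψ)|² = 1 / N` and
`γ = √N`, and the chain rule at `N = 1` gives `∂²_ηη (1 / N) = 2 (2κ)² - 4κ² = 4κ²` and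
`∂²_ηη √N = 4κ² / 2 - (2κ)² / 4 = κ²`.
-/

open Real Set

open Filter Topology Function

noncomputable def partialDeriv {E : Type*} [NormedAddCommGroup E] [NormedSpace ℝ E]
    (v : E) (g : E → ℝ) (p : E) : ℝ :=
  fderiv ℝ g p v

section partialDeriv

variable {E : Type*} [NormedAddCommGroup E] [NormedSpace ℝ E] {v : E} {g h : E → ℝ} {p : E}

theorem HasFDerivAt.partialDeriv_eq {g' : E →L[ℝ] ℝ} (hg : HasFDerivAt g g' p) :
    partialDeriv v g p = g' v := by
  rw [partialDeriv, hg.fderiv]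

theorem ContDiff.partialDeriv {m n : WithTop ℕ∞} (hg : ContDiff ℝ n g) (hmn : m + 1 ≤ n) :
    ContDiff ℝ m (partialDeriv v g) :=
  (hg.fderiv_right hmn).clm_apply contDiff_const

theorem partialDeriv_congr_of_eqOn {V : Set E} (hV : IsOpen V) (hgh : EqOn g h V) (hp : p ∈ V) :
    partialDeriv v g p = partialDeriv v h p := by
  rw [partialDeriv, partialDeriv, (hgh.eventuallyEq_of_mem (hV.mem_nhds hp)).fderiv_eq]

theorem partialDeriv_neg : partialDeriv v (fun q => -g q) = fun q => -partialDeriv v g q := by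
  funext q
  simp [partialDeriv, fderiv_fun_neg]

theorem partialDeriv_comm (hg : ContDiff ℝ 2 g) (v w : E) :
    partialDeriv v (partialDeriv w g) = partialDeriv w (partialDeriv v g) := by
  funext p
  have hdiff : DifferentiableAt ℝ (fderiv ℝ g) p :=
    ((hg.fderiv_right (m := 1) le_rfl).differentiable one_ne_zero).differentiableAt
  show fderiv ℝ (fun q => fderiv ℝ g q w) p v = fderiv ℝ (fun q => fderiv ℝ g q v) p w
  rw [fderiv_clm_apply hdiff (differentiableAt_const w),
    fderiv_clm_apply hdiff (differentiableAt_const v)]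
  simpa using hg.contDiffAt.isSymmSndFDerivAt (by simp) v w

theorem partialDeriv_sq_add_sq (hg : Differentiable ℝ g) (hh : Differentiable ℝ h) :
    partialDeriv v (fun q => g q ^ 2 + h q ^ 2)
      = fun q => 2 * (g q * partialDeriv v g q + h q * partialDeriv v h q) := by
  funext q
  rw [(((hg q).hasFDerivAt.pow 2).fun_add ((hh q).hasFDerivAt.pow 2)).partialDeriv_eq]
  simp only [partialDeriv, Nat.add_one_sub_one, pow_one, nsmul_eq_mul, Nat.cast_ofNat,
    add_apply, smul_apply, smul_eq_mul]
  ring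

theorem partialDeriv_partialDeriv_sq_add_sq (hg : ContDiff ℝ 2 g) (hh : ContDiff ℝ 2 h) (p : E) :
    partialDeriv v (partialDeriv v (fun q => g q ^ 2 + h q ^ 2)) p
      = 2 * (partialDeriv v g p ^ 2 + g p * partialDeriv v (partialDeriv v g) p
        + partialDeriv v h p ^ 2 + h p * partialDeriv v (partialDeriv v h) p) := by
  have hg' : ContDiff ℝ 1 (partialDeriv v g) := hg.partialDeriv le_rfl
  have hh' : ContDiff ℝ 1 (partialDeriv v h) := hh.partialDeriv le_rfl
  rw [partialDeriv_sq_add_sq (hg.differentiable two_ne_zero) (hh.differentiable two_ne_zero)]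
  have hd := (((hg.differentiable two_ne_zero p).hasFDerivAt.fun_mul
      (hg'.differentiable one_ne_zero p).hasFDerivAt).fun_add
    ((hh.differentiable two_ne_zero p).hasFDerivAt.fun_mul
      (hh'.differentiable one_ne_zero p).hasFDerivAt)).const_mul 2
  rw [hd.partialDeriv_eq]
  simp only [partialDeriv, smul_add, add_apply, smul_apply, smul_eq_mul]
  ring

end partialDeriv

theorem hasDerivAt_deriv_inv {e e' : ℝ → ℝ} {e'' t₀ : ℝ}
    (he : ∀ᶠ t in 𝓝 t₀, HasDerivAt e (e' t) t) (he' : HasDerivAt e' e'' t₀) (h₀ : e t₀ ≠ 0) :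
    HasDerivAt (deriv fun t => (e t)⁻¹) (2 * e' t₀ ^ 2 / e t₀ ^ 3 - e'' / e t₀ ^ 2) t₀ := by
  have hne : ∀ᶠ t in 𝓝 t₀, e t ≠ 0 := he.self_of_nhds.continuousAt.eventually_ne h₀
  have hderiv : deriv (fun t => (e t)⁻¹) =ᶠ[𝓝 t₀] fun t => -e' t / e t ^ 2 := by
    filter_upwards [he, hne] with t ht hte using (ht.fun_inv hte).deriv
  refine HasDerivAt.congr_of_eventuallyEq ?_ hderiv
  refine (he'.fun_neg.fun_div (he.self_of_nhds.fun_pow 2) (pow_ne_zero 2 h₀)).congr_deriv ?_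
  field_simp
  ring

theorem hasDerivAt_deriv_sqrt {e e' : ℝ → ℝ} {e'' t₀ : ℝ}
    (he : ∀ᶠ t in 𝓝 t₀, HasDerivAt e (e' t) t) (he' : HasDerivAt e' e'' t₀) (h₀ : 0 < e t₀) :
    HasDerivAt (deriv fun t => √(e t))
      (e'' / (2 * √(e t₀)) - e' t₀ ^ 2 / (4 * e t₀ * √(e t₀))) t₀ := by
  have hne : ∀ᶠ t in 𝓝 t₀, e t ≠ 0 := he.self_of_nhds.continuousAt.eventually_ne h₀.ne'
  have hderiv : deriv (fun t => √(e t)) =ᶠ[𝓝 t₀] fun t => e' t / (2 * √(e t)) := by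
    filter_upwards [he, hne] with t ht hte using (ht.sqrt hte).deriv
  refine HasDerivAt.congr_of_eventuallyEq ?_ hderiv
  refine (he'.fun_div ((he.self_of_nhds.sqrt h₀.ne').const_mul 2) (by positivity)).congr_deriv ?_
  field_simp
  rw [Real.sq_sqrt h₀.le]
  ring

local notation "∂ξ" => partialDeriv ((1 : ℝ), (0 : ℝ))
local notation "∂η" => partialDeriv ((0 : ℝ), (1 : ℝ))

theorem hasDerivAt_partialDeriv_fst {g : ℝ × ℝ → ℝ} {a b : ℝ}
    (hg : DifferentiableAt ℝ g (a, b)) : HasDerivAt (fun s => g (s, b)) (∂ξ g (a, b)) a :=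
  hg.hasFDerivAt.comp_hasDerivAt a ((hasDerivAt_id a).prodMk (hasDerivAt_const a b))

theorem hasDerivAt_partialDeriv_snd {g : ℝ × ℝ → ℝ} {a b : ℝ}
    (hg : DifferentiableAt ℝ g (a, b)) : HasDerivAt (fun t => g (a, t)) (∂η g (a, b)) b :=
  hg.hasFDerivAt.comp_hasDerivAt b ((hasDerivAt_const b a).prodMk (hasDerivAt_id b))

theorem pdx_eq_partialDeriv {f : ℝ → ℝ → ℝ} {a b : ℝ}
    (hf : DifferentiableAt ℝ (uncurry f) (a, b)) : pdx f a b = ∂ξ (uncurry f) (a, b) :=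
  (hasDerivAt_partialDeriv_fst hf).deriv

theorem pdy_eq_partialDeriv {f : ℝ → ℝ → ℝ} {a b : ℝ}
    (hf : DifferentiableAt ℝ (uncurry f) (a, b)) : pdy f a b = ∂η (uncurry f) (a, b) :=
  (hasDerivAt_partialDeriv_snd hf).deriv

theorem pdx_pdx_eq_partialDeriv {f : ℝ → ℝ → ℝ} {a b : ℝ} (hf : ContDiff ℝ 2 (uncurry f)) :
    pdx (pdx f) a b = ∂ξ (∂ξ (uncurry f)) (a, b) := by
  have hpdx : uncurry (pdx f) = ∂ξ (uncurry f) :=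
    funext fun _ => pdx_eq_partialDeriv (hf.differentiable two_ne_zero _)
  have hd : Differentiable ℝ (uncurry (pdx f)) :=
    hpdx ▸ (hf.partialDeriv (m := 1) le_rfl).differentiable one_ne_zero
  rw [pdx_eq_partialDeriv (hd _), hpdx]

theorem partialDeriv_fst_eq_zero_of_eventually_eq {g : ℝ × ℝ → ℝ} {a b c : ℝ}
    (hg : DifferentiableAt ℝ g (a, b)) (hc : ∀ᶠ s in 𝓝 a, g (s, b) = c) : ∂ξ g (a, b) = 0 := by
  rw [← (hasDerivAt_partialDeriv_fst hg).deriv, EventuallyEq.deriv_eq (f := fun _ => c) hc,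
    deriv_const]

def IsCauchyRiemannOn (X Y : ℝ × ℝ → ℝ) (V : Set (ℝ × ℝ)) : Prop :=
  EqOn (∂ξ X) (∂η Y) V ∧ EqOn (∂η X) (fun p => -∂ξ Y p) V

theorem isCauchyRiemannOn_uncurry {x y : ℝ → ℝ → ℝ} {V : Set (ℝ × ℝ)}
    (hx : Differentiable ℝ (uncurry x)) (hy : Differentiable ℝ (uncurry y))
    (h₁ : ∀ a b, (a, b) ∈ V → pdx x a b = pdy y a b)
    (h₂ : ∀ a b, (a, b) ∈ V → pdy x a b = -pdx y a b) :
    IsCauchyRiemannOn (uncurry x) (uncurry y) V := by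
  refine ⟨fun ⟨a, b⟩ hp => ?_, fun ⟨a, b⟩ hp => ?_⟩
  · rw [← pdx_eq_partialDeriv (hx _), ← pdy_eq_partialDeriv (hy _)]
    exact h₁ a b hp
  · dsimp only
    rw [← pdy_eq_partialDeriv (hx _), ← pdx_eq_partialDeriv (hy _)]
    exact h₂ a b hp

noncomputable def speedSq (X Y : ℝ × ℝ → ℝ) (q : ℝ × ℝ) : ℝ := ∂ξ X q ^ 2 + ∂ξ Y q ^ 2

namespace IsCauchyRiemannOn

variable {X Y : ℝ × ℝ → ℝ} {V : Set (ℝ × ℝ)}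

theorem partialDeriv_fst (h : IsCauchyRiemannOn X Y V) (hV : IsOpen V)
    (hX : ContDiff ℝ 2 X) (hY : ContDiff ℝ 2 Y) : IsCauchyRiemannOn (∂ξ X) (∂ξ Y) V := by
  refine ⟨fun p hp => ?_, fun p hp => ?_⟩
  · calc ∂ξ (∂ξ X) p = ∂ξ (∂η Y) p := partialDeriv_congr_of_eqOn hV h.1 hp
      _ = ∂η (∂ξ Y) p := by rw [partialDeriv_comm hY]
  · calc ∂η (∂ξ X) p = ∂ξ (∂η X) p := by rw [partialDeriv_comm hX]
      _ = ∂ξ (fun q => -∂ξ Y q) p := partialDeriv_congr_of_eqOn hV h.2 hp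
      _ = -∂ξ (∂ξ Y) p := by rw [partialDeriv_neg]

theorem partialDeriv_snd_snd_left (h : IsCauchyRiemannOn X Y V) (hV : IsOpen V)
    (hY : ContDiff ℝ 2 Y) : EqOn (∂η (∂η X)) (fun p => -∂ξ (∂ξ X) p) V := fun p hp =>
  calc ∂η (∂η X) p = ∂η (fun q => -∂ξ Y q) p := partialDeriv_congr_of_eqOn hV h.2 hp
    _ = -∂ξ (∂η Y) p := by rw [partialDeriv_neg, partialDeriv_comm hY]
    _ = -∂ξ (∂ξ X) p := by rw [partialDeriv_congr_of_eqOn hV h.1.symm hp]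

theorem partialDeriv_snd_snd_right (h : IsCauchyRiemannOn X Y V) (hV : IsOpen V)
    (hX : ContDiff ℝ 2 X) : EqOn (∂η (∂η Y)) (fun p => -∂ξ (∂ξ Y) p) V := fun p hp =>
  calc ∂η (∂η Y) p = ∂η (∂ξ X) p := partialDeriv_congr_of_eqOn hV h.1.symm hp
    _ = ∂ξ (fun q => -∂ξ Y q) p := by
      rw [← partialDeriv_comm hX, partialDeriv_congr_of_eqOn hV h.2 hp]
    _ = -∂ξ (∂ξ Y) p := by rw [partialDeriv_neg]

theorem partialDeriv_snd_sq_add_sq (h : IsCauchyRiemannOn X Y V)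
    (hX : Differentiable ℝ X) (hY : Differentiable ℝ Y) :
    EqOn (∂η fun q => X q ^ 2 + Y q ^ 2) (fun p => 2 * (Y p * ∂ξ X p - X p * ∂ξ Y p)) V := by
  intro p hp
  rw [partialDeriv_sq_add_sq hX hY]
  simp only [h.2 hp, ← h.1 hp]
  ring

theorem partialDeriv_snd_snd_sq_add_sq (h : IsCauchyRiemannOn X Y V) (hV : IsOpen V)
    (hX : ContDiff ℝ 2 X) (hY : ContDiff ℝ 2 Y) {p : ℝ × ℝ} (hp : p ∈ V) :
    ∂η (∂η fun q => X q ^ 2 + Y q ^ 2) p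
      = 4 * (∂ξ X p ^ 2 + ∂ξ Y p ^ 2) - ∂ξ (∂ξ fun q => X q ^ 2 + Y q ^ 2) p := by
  rw [partialDeriv_partialDeriv_sq_add_sq hX hY, partialDeriv_partialDeriv_sq_add_sq hX hY,
    h.2 hp, ← h.1 hp, h.partialDeriv_snd_snd_left hV hY hp, h.partialDeriv_snd_snd_right hV hX hp]
  ring

theorem partialDeriv_snd_snd_sq_add_sq_of_eventually_eq_one (h : IsCauchyRiemannOn X Y V)
    (hV : IsOpen V) (hX : ContDiff ℝ 2 X) (hY : ContDiff ℝ 2 Y) {a : ℝ} (ha : (a, 0) ∈ V)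
    (h₁ : ∀ᶠ s in 𝓝 a, X (s, 0) ^ 2 + Y (s, 0) ^ 2 = 1) :
    ∂η (∂η fun q => X q ^ 2 + Y q ^ 2) (a, 0)
      = 4 * (Y (a, 0) * ∂ξ X (a, 0) - X (a, 0) * ∂ξ Y (a, 0)) ^ 2 := by
  have hN : ContDiff ℝ 2 fun q => X q ^ 2 + Y q ^ 2 := (hX.pow 2).add (hY.pow 2)
  have hNξ : ∀ᶠ s in 𝓝 a, ∂ξ (fun q => X q ^ 2 + Y q ^ 2) (s, 0) = 0 :=
    h₁.eventually_nhds.mono fun s hs =>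
      partialDeriv_fst_eq_zero_of_eventually_eq (hN.differentiable two_ne_zero _) hs
  have hNξξ : ∂ξ (∂ξ fun q => X q ^ 2 + Y q ^ 2) (a, 0) = 0 :=
    partialDeriv_fst_eq_zero_of_eventually_eq
      ((hN.partialDeriv (m := 1) le_rfl).differentiable one_ne_zero _) hNξ
  have hunit := h₁.self_of_nhds
  have horth := hNξ.self_of_nhds
  rw [partialDeriv_sq_add_sq (hX.differentiable two_ne_zero) (hY.differentiable two_ne_zero)]
    at horth
  rw [h.partialDeriv_snd_snd_sq_add_sq hV hX hY ha, hNξξ]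
  -- Lagrange's identity
  linear_combination (-4 * (∂ξ X (a, 0) ^ 2 + ∂ξ Y (a, 0) ^ 2)) * hunit
    + 2 * (X (a, 0) * ∂ξ X (a, 0) + Y (a, 0) * ∂ξ Y (a, 0)) * horth

theorem partialDeriv_snd_speedSq (h : IsCauchyRiemannOn X Y V) (hV : IsOpen V)
    (hX : ContDiff ℝ 3 X) (hY : ContDiff ℝ 3 Y) {a : ℝ} (ha : (a, 0) ∈ V)
    (h₁ : ∀ᶠ s in 𝓝 a, speedSq X Y (s, 0) = 1) :
    ∂η (speedSq X Y) (a, 0)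
        = 2 * (∂ξ Y (a, 0) * ∂ξ (∂ξ X) (a, 0) - ∂ξ X (a, 0) * ∂ξ (∂ξ Y) (a, 0)) ∧
      ∂η (∂η (speedSq X Y)) (a, 0)
        = 4 * (∂ξ Y (a, 0) * ∂ξ (∂ξ X) (a, 0) - ∂ξ X (a, 0) * ∂ξ (∂ξ Y) (a, 0)) ^ 2 := by
  have hU : ContDiff ℝ 2 (∂ξ X) := hX.partialDeriv (by norm_num)
  have hW : ContDiff ℝ 2 (∂ξ Y) := hY.partialDeriv (by norm_num)
  have hUW := h.partialDeriv_fst hV (hX.of_le (by norm_num)) (hY.of_le (by norm_num))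
  exact ⟨hUW.partialDeriv_snd_sq_add_sq (hU.differentiable two_ne_zero)
      (hW.differentiable two_ne_zero) ha,
    hUW.partialDeriv_snd_snd_sq_add_sq_of_eventually_eq_one hV hU hW ha h₁⟩

end IsCauchyRiemannOn

/-- in conformal coordinates `(ξ,η)` flattening an arc-length
parameterized curve `Γ`, with `F = |∇ξ(Ψ)|² = ((∂_ξ x̃)² + (∂_ξ ỹ)²)⁻¹` and
`γ = 1/|∇ξ(Ψ)|`, one has `∂²_{ηη}(|∇ξ(Ψ)|²)(ξ,0) = 4[curv Γ(ξ)]²` and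
consequently `∂²_{ηη}γ(ξ,0) = [curv Γ(ξ)]²`. -/
theorem stmt6 (V : Set (ℝ × ℝ)) (hV : IsOpen V)
    (xt yt : ℝ → ℝ → ℝ)
    (hxt : ContDiff ℝ 4 (fun p : ℝ × ℝ => xt p.1 p.2))
    (hyt : ContDiff ℝ 4 (fun p : ℝ × ℝ => yt p.1 p.2))
    (hCR1 : ∀ a b : ℝ, (a, b) ∈ V → pdx xt a b = pdy yt a b)
    (hCR2 : ∀ a b : ℝ, (a, b) ∈ V → pdy xt a b = - pdx yt a b)
    (hnorm : ∀ a : ℝ, (a, 0) ∈ V → (pdx xt a 0) ^ 2 + (pdx yt a 0) ^ 2 = 1)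
    (κ : ℝ → ℝ)
    (hκ : ∀ a : ℝ, (a, 0) ∈ V →
      κ a = - pdx xt a 0 * pdx (fun s t => pdx yt s t) a 0
            + pdx yt a 0 * pdx (fun s t => pdx xt s t) a 0)
    (F γ : ℝ → ℝ → ℝ)
    (hF : ∀ a b : ℝ, F a b = (((pdx xt a b) ^ 2 + (pdx yt a b) ^ 2))⁻¹)
    (hγ : ∀ a b : ℝ, γ a b = Real.sqrt ((pdx xt a b) ^ 2 + (pdx yt a b) ^ 2)) :
    ∀ a : ℝ, (a, 0) ∈ V →
      pdy (fun s t => pdy F s t) a 0 = 4 * (κ a) ^ 2 ∧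
      pdy (fun s t => pdy γ s t) a 0 = (κ a) ^ 2 := by
  intro a ha
  have hX : ContDiff ℝ 4 (uncurry xt) := hxt
  have hY : ContDiff ℝ 4 (uncurry yt) := hyt
  have hXd := hX.differentiable (by norm_num)
  have hYd := hY.differentiable (by norm_num)
  set N := speedSq (uncurry xt) (uncurry yt)
  have hN : ContDiff ℝ 3 N := ((hX.partialDeriv (by norm_num)).pow 2).add
    ((hY.partialDeriv (by norm_num)).pow 2)
  have hN_eq (s t : ℝ) : pdx xt s t ^ 2 + pdx yt s t ^ 2 = N (s, t) := by
    rw [pdx_eq_partialDeriv (hXd _), pdx_eq_partialDeriv (hYd _)]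
    rfl
  have hN_one : ∀ᶠ s in 𝓝 a, N (s, 0) = 1 := by
    have hline : ∀ᶠ s in 𝓝 a, (s, (0 : ℝ)) ∈ V :=
      (continuous_id.prodMk continuous_const).continuousAt.preimage_mem_nhds (hV.mem_nhds ha)
    exact hline.mono fun s hs => (hN_eq s 0).symm.trans (hnorm s hs)
  have hκa : κ a = ∂ξ (uncurry yt) (a, 0) * ∂ξ (∂ξ (uncurry xt)) (a, 0)
      - ∂ξ (uncurry xt) (a, 0) * ∂ξ (∂ξ (uncurry yt)) (a, 0) := by
    rw [hκ a ha, pdx_pdx_eq_partialDeriv (hX.of_le (by norm_num)),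
      pdx_pdx_eq_partialDeriv (hY.of_le (by norm_num)), pdx_eq_partialDeriv (hXd _),
      pdx_eq_partialDeriv (hYd _)]
    ring
  obtain ⟨hNη, hNηη⟩ := (isCauchyRiemannOn_uncurry hXd hYd hCR1 hCR2).partialDeriv_snd_speedSq hV
    (hX.of_le (by norm_num)) (hY.of_le (by norm_num)) ha hN_one
  rw [← hκa] at hNη hNηη
  have hslice : ∀ᶠ t in 𝓝 (0 : ℝ), HasDerivAt (fun t => N (a, t)) (∂η N (a, t)) t :=
    Eventually.of_forall fun t => hasDerivAt_partialDeriv_snd (hN.differentiable (by norm_num) _)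
  have hslice' : HasDerivAt (fun t => ∂η N (a, t)) (∂η (∂η N) (a, 0)) 0 :=
    hasDerivAt_partialDeriv_snd ((hN.partialDeriv (m := 2) le_rfl).differentiable (by norm_num) _)
  have hN₀ : N (a, 0) = 1 := hN_one.self_of_nhds
  have hF_slice : (fun t => F a t) = fun t => (N (a, t))⁻¹ := funext fun t => by rw [hF, hN_eq]
  have hγ_slice : (fun t => γ a t) = fun t => √(N (a, t)) := funext fun t => by rw [hγ, hN_eq]
  constructor
  · show deriv (deriv fun t => F a t) 0 = _
    rw [hF_slice, (hasDerivAt_deriv_inv hslice hslice' (by rw [hN₀]; norm_num)).deriv, hN₀, hNη,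
      hNηη]
    ring
  · show deriv (deriv fun t => γ a t) 0 = _
    rw [hγ_slice, (hasDerivAt_deriv_sqrt hslice hslice' (by rw [hN₀]; norm_num)).deriv, hN₀, hNη,
      hNηη, Real.sqrt_one]
    ring
end

section
/- Let l > 0 and let k ≥ 0. Consider the Riccati Cauchy problem -τ' + τ² - (κ(ξ))² = -π²/(16 l²), τ(0) = 0, on [0, l], where κ is continuous with ‖κ‖_∞ ≤ k. Then the solution τ exists on all of [0, l] and satisfies ‖τ‖_∞ ≤ max{π/(4l), k}. -/
/-!
Put `a = π / (4 l)` and `M = max a k`. Truncating `τ²` to `min |τ| M ^ 2` makes the Riccati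
field globally Lipschitz, so Picard–Lindelöf gives a solution on a neighbourhood of `[0, l]`.
It stays above the barrier `-M`, where its derivative is `M² + a² - κ² > 0`, and below
`b tan (b ξ)` for every `b > a`, since that function solves the strictly faster equation
`τ' = τ² + b²`; letting `b → a` gives `τ ≤ a tan (a ξ) ≤ a tan (π / 4) = a`. Hence `|τ| ≤ M`,
the truncation is inactive, and `τ` solves the original problem.
-/

open Real Set Filter Topology
open scoped NNReal

theorem exists_forall_hasDerivAt_of_lipschitzWith_of_norm_le {E : Type*}
    [NormedAddCommGroup E] [NormedSpace ℝ E] [CompleteSpace E] {f : ℝ → E → E} {K L : ℝ≥0}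
    {tmin tmax t₀ : ℝ} (ht₀ : t₀ ∈ Icc tmin tmax) (x₀ : E)
    (hlip : ∀ t ∈ Icc tmin tmax, LipschitzWith K (f t))
    (hcont : ∀ x, ContinuousOn (f · x) (Icc tmin tmax))
    (hnorm : ∀ t ∈ Icc tmin tmax, ∀ x, ‖f t x‖ ≤ L) :
    ∃ α : ℝ → E, α t₀ = x₀ ∧ ∀ t ∈ Ioo tmin tmax, HasDerivAt α (f t (α t)) t := by
  -- A global bound `L` lets a ball of radius `L * (tmax - tmin)` contain every trajectory.
  have hpl : IsPicardLindelof f ⟨t₀, ht₀⟩ x₀ (L * (tmax - tmin).toNNReal) 0 L K :=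
    { lipschitzOnWith := fun t ht ↦ (hlip t ht).lipschitzOnWith
      continuousOn := fun x _ ↦ hcont x
      norm_le := fun t ht x _ ↦ hnorm t ht x
      mul_max_le := by
        rw [NNReal.coe_zero, sub_zero, NNReal.coe_mul,
          Real.coe_toNNReal _ (by linarith [ht₀.1, ht₀.2])]
        gcongr
        exact max_le (by linarith [ht₀.1]) (by linarith [ht₀.2]) }
  obtain ⟨α, hα₀, hα⟩ := hpl.exists_eq_forall_mem_Icc_hasDerivWithinAt₀
  exact ⟨α, hα₀, fun t ht ↦
    (hα t (Ioo_subset_Icc_self ht)).hasDerivAt (Icc_mem_nhds ht.1 ht.2)⟩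

theorem lipschitzWith_min_abs_sq {M : ℝ} (hM : 0 ≤ M) :
    LipschitzWith (2 * M).toNNReal (fun x : ℝ ↦ min |x| M ^ 2) := by
  have hmin : LipschitzWith 1 (fun x : ℝ ↦ min |x| M) := lipschitzWith_one_norm.min_const M
  refine LipschitzWith.of_dist_le_mul fun x y ↦ ?_
  have hx : |min |x| M| ≤ M := abs_le.2 ⟨by linarith [le_min (abs_nonneg x) hM], min_le_right _ _⟩
  have hy : |min |y| M| ≤ M := abs_le.2 ⟨by linarith [le_min (abs_nonneg y) hM], min_le_right _ _⟩
  have hxy := hmin.dist_le_mul x y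
  rw [NNReal.coe_one, one_mul] at hxy
  rw [Real.coe_toNNReal _ (by linarith), Real.dist_eq, sq_sub_sq, abs_mul]
  gcongr
  · linarith [abs_add_le (min |x| M) (min |y| M)]
  · exact hxy

theorem exists_forall_hasDerivAt_min_abs_sq_add {M : ℝ} (hM : 0 ≤ M) {p : ℝ → ℝ}
    (hp : Continuous p) {tmin tmax t₀ : ℝ} (ht₀ : t₀ ∈ Icc tmin tmax) (x₀ : ℝ) :
    ∃ τ : ℝ → ℝ, τ t₀ = x₀ ∧ ∀ t ∈ Ioo tmin tmax, HasDerivAt τ (min |τ t| M ^ 2 + p t) t := by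
  obtain ⟨C, hC⟩ :=
    isCompact_Icc.exists_bound_of_continuousOn (hp.continuousOn (s := Icc tmin tmax))
  refine exists_forall_hasDerivAt_of_lipschitzWith_of_norm_le
    (f := fun t x ↦ min |x| M ^ 2 + p t) (K := (2 * M).toNNReal) (L := (M ^ 2 + C).toNNReal)
    ht₀ x₀ (fun t _ ↦ ?_) (fun x ↦ ?_) (fun t ht x ↦ ?_)
  · simpa using (lipschitzWith_min_abs_sq hM).add (LipschitzWith.const (p t))
  · exact (continuous_const.add hp).continuousOn
  · have hsq : |min |x| M ^ 2| ≤ M ^ 2 := by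
      rw [abs_of_nonneg (sq_nonneg _)]
      exact pow_le_pow_left₀ (le_min (abs_nonneg x) hM) (min_le_right _ _) 2
    calc ‖min |x| M ^ 2 + p t‖ ≤ |min |x| M ^ 2| + ‖p t‖ := norm_add_le _ _
      _ ≤ M ^ 2 + C := add_le_add hsq (hC t ht)
      _ ≤ (M ^ 2 + C).toNNReal := Real.le_coe_toNNReal _

theorem hasDerivAt_mul_tan_mul {b ξ : ℝ} (h : cos (b * ξ) ≠ 0) :
    HasDerivAt (fun s ↦ b * tan (b * s)) ((b * tan (b * ξ)) ^ 2 + b ^ 2) ξ := by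
  refine (((hasDerivAt_tan h).comp ξ ((hasDerivAt_id ξ).const_mul b)).const_mul b).congr_deriv ?_
  rw [← inv_one_add_tan_sq h]
  simp only [one_div, inv_inv, mul_one]
  ring

theorem neg_le_of_hasDerivAt_min_abs_sq_add {τ p : ℝ → ℝ} {M l : ℝ} (hτ₀ : -M ≤ τ 0)
    (hτ : ∀ ξ ∈ Icc 0 l, HasDerivAt τ (min |τ ξ| M ^ 2 + p ξ) ξ)
    (hp : ∀ ξ ∈ Icc 0 l, -M ^ 2 < p ξ) : ∀ ξ ∈ Icc 0 l, -M ≤ τ ξ := by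
  intro ξ hξ
  have := image_le_of_deriv_right_lt_deriv_boundary (f := fun s ↦ -τ s) (B := fun _ ↦ M)
    (fun s hs ↦ (hτ s hs).continuousAt.neg.continuousWithinAt)
    (fun s hs ↦ (hτ s (Ico_subset_Icc_self hs)).neg.hasDerivWithinAt)
    (by simpa [neg_le] using hτ₀) (fun _ ↦ hasDerivAt_const _ M)
    (fun s hs hτs ↦ ?_) hξ
  · linarith
  · have hτs : τ s = -M := by linarith
    rw [hτs, abs_neg, min_eq_right (le_abs_self M)]
    linarith [hp s (Ico_subset_Icc_self hs)]

theorem le_mul_tan_mul_of_hasDerivAt_le {τ τ' : ℝ → ℝ} {a b l : ℝ} (hτ₀ : τ 0 ≤ 0)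
    (hτ : ∀ ξ ∈ Icc 0 l, HasDerivAt τ (τ' ξ) ξ) (hτ' : ∀ ξ ∈ Icc 0 l, τ' ξ ≤ τ ξ ^ 2 + a ^ 2)
    (hab : a ^ 2 < b ^ 2) (hb : 0 ≤ b) (hbl : b * l < π / 2) :
    ∀ ξ ∈ Icc 0 l, τ ξ ≤ b * tan (b * ξ) := by
  have hcos : ∀ ξ ∈ Icc 0 l, cos (b * ξ) ≠ 0 := fun ξ hξ ↦ (cos_pos_of_mem_Ioo
    ⟨by nlinarith [Real.pi_pos, hξ.1], by nlinarith [hξ.2]⟩).ne'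
  refine image_le_of_deriv_right_lt_deriv_boundary'
    (fun s hs ↦ (hτ s hs).continuousAt.continuousWithinAt)
    (fun s hs ↦ (hτ s (Ico_subset_Icc_self hs)).hasDerivWithinAt) (by simpa using hτ₀)
    (fun s hs ↦ (hasDerivAt_mul_tan_mul (hcos s hs)).continuousAt.continuousWithinAt)
    (fun s hs ↦ (hasDerivAt_mul_tan_mul (hcos s (Ico_subset_Icc_self hs))).hasDerivWithinAt)
    fun s hs hτs ↦ ?_
  rw [← hτs]
  linarith [hτ' s (Ico_subset_Icc_self hs)]

theorem le_mul_tan_mul_of_hasDerivAt_le' {τ τ' : ℝ → ℝ} {a l : ℝ} (hτ₀ : τ 0 ≤ 0)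
    (hτ : ∀ ξ ∈ Icc 0 l, HasDerivAt τ (τ' ξ) ξ) (hτ' : ∀ ξ ∈ Icc 0 l, τ' ξ ≤ τ ξ ^ 2 + a ^ 2)
    (ha : 0 ≤ a) (hal : a * l < π / 2) : ∀ ξ ∈ Icc 0 l, τ ξ ≤ a * tan (a * ξ) := by
  intro ξ hξ
  have hcos : cos (a * ξ) ≠ 0 := (cos_pos_of_mem_Ioo
    ⟨by nlinarith [Real.pi_pos, hξ.1], by nlinarith [hξ.2]⟩).ne'
  have hlim : Tendsto (fun b ↦ b * tan (b * ξ)) (𝓝[>] a) (𝓝 (a * tan (a * ξ))) :=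
    (continuousAt_id.mul ((continuousAt_tan.2 hcos).comp (f := fun b ↦ b * ξ)
      (continuousAt_id.mul continuousAt_const))).continuousWithinAt.tendsto
  have hsmall : ∀ᶠ b in 𝓝[>] a, b * l < π / 2 :=
    nhdsWithin_le_nhds ((continuous_mul_const l).continuousAt.eventually (gt_mem_nhds hal))
  refine ge_of_tendsto hlim ((hsmall.and self_mem_nhdsWithin).mono fun b ⟨hbl, hab⟩ ↦ ?_)
  exact le_mul_tan_mul_of_hasDerivAt_le hτ₀ hτ hτ' (pow_lt_pow_left₀ hab ha two_ne_zero)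
    (ha.trans hab.le) hbl ξ hξ

theorem tan_le_one_of_le_pi_div_four {x : ℝ} (h₀ : -(π / 2) < x) (h₁ : x ≤ π / 4) : tan x ≤ 1 :=
  tan_pi_div_four ▸ strictMonoOn_tan.monotoneOn ⟨h₀, by linarith [Real.pi_pos]⟩
    ⟨by linarith [Real.pi_pos], by linarith [Real.pi_pos]⟩ h₁

theorem stmt7_general (l k : ℝ) (hl : 0 < l) (κ : ℝ → ℝ)
    (hκc : Continuous κ) (hκb : ∀ ξ ∈ Icc (0:ℝ) l, |κ ξ| ≤ k) :
    ∃ τ : ℝ → ℝ, τ 0 = 0 ∧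
      (∀ ξ ∈ Icc (0:ℝ) l,
        HasDerivAt τ (τ ξ ^ 2 - κ ξ ^ 2 + π ^ 2 / (16 * l ^ 2)) ξ) ∧
      ∀ ξ ∈ Icc (0:ℝ) l, |τ ξ| ≤ max (π / (4 * l)) k := by
  set a := π / (4 * l) with ha
  have ha₀ : 0 < a := by positivity
  have hal : a * l = π / 4 := by rw [ha]; field_simp
  set M := max a k
  have hM : 0 ≤ M := ha₀.le.trans (le_max_left a k)
  have hκM : ∀ ξ ∈ Icc 0 l, κ ξ ^ 2 ≤ M ^ 2 := fun ξ hξ ↦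
    sq_le_sq.2 ((hκb ξ hξ).trans ((le_max_right a k).trans (le_abs_self M)))
  obtain ⟨τ, hτ₀, hτ⟩ := exists_forall_hasDerivAt_min_abs_sq_add hM (p := fun t ↦ a ^ 2 - κ t ^ 2)
    (by fun_prop) (t₀ := 0) (tmin := -1) (tmax := l + 1) ⟨by linarith, by linarith⟩ 0
  replace hτ : ∀ ξ ∈ Icc 0 l, HasDerivAt τ (min |τ ξ| M ^ 2 + (a ^ 2 - κ ξ ^ 2)) ξ :=
    fun ξ hξ ↦ hτ ξ ⟨by linarith [hξ.1], by linarith [hξ.2]⟩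
  have hlow := neg_le_of_hasDerivAt_min_abs_sq_add (by linarith [hτ₀]) hτ
    fun ξ hξ ↦ by nlinarith [hκM ξ hξ]
  have hfield : ∀ ξ, min |τ ξ| M ^ 2 + (a ^ 2 - κ ξ ^ 2) ≤ τ ξ ^ 2 + a ^ 2 := fun ξ ↦ by
    nlinarith [pow_le_pow_left₀ (le_min (abs_nonneg (τ ξ)) hM) (min_le_left _ M) 2,
      sq_abs (τ ξ), sq_nonneg (κ ξ)]
  have hup : ∀ ξ ∈ Icc 0 l, τ ξ ≤ M := fun ξ hξ ↦ calc
    τ ξ ≤ a * tan (a * ξ) := le_mul_tan_mul_of_hasDerivAt_le' hτ₀.le hτ (fun s _ ↦ hfield s)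
        ha₀.le (by linarith [Real.pi_pos]) ξ hξ
    _ ≤ a := mul_le_of_le_one_right ha₀.le (tan_le_one_of_le_pi_div_four
        (by nlinarith [Real.pi_pos, hξ.1]) (by nlinarith [hξ.2]))
    _ ≤ M := le_max_left a k
  have habs : ∀ ξ ∈ Icc 0 l, |τ ξ| ≤ M := fun ξ hξ ↦ abs_le.2 ⟨hlow ξ hξ, hup ξ hξ⟩
  refine ⟨τ, hτ₀, fun ξ hξ ↦ ?_, habs⟩
  convert hτ ξ hξ using 1
  rw [min_eq_left (habs ξ hξ), sq_abs, ha]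
  ring

/-- the Riccati Cauchy problem
`-τ' + τ² - κ² = -π²/(16 l²)`, `τ(0) = 0` on `[0,l]`, with `κ` continuous and
`‖κ‖_∞ ≤ k`, has a solution defined on all of `[0,l]` with
`‖τ‖_∞ ≤ max {π/(4l), k}`. -/
theorem stmt7 (l k : ℝ) (hl : 0 < l) (hk : 0 ≤ k) (κ : ℝ → ℝ)
    (hκc : Continuous κ) (hκb : ∀ ξ ∈ Icc (0:ℝ) l, |κ ξ| ≤ k) :
    ∃ τ : ℝ → ℝ, τ 0 = 0 ∧
      (∀ ξ ∈ Icc (0:ℝ) l,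
        HasDerivAt τ (τ ξ ^ 2 - κ ξ ^ 2 + π ^ 2 / (16 * l ^ 2)) ξ) ∧
      ∀ ξ ∈ Icc (0:ℝ) l, |τ ξ| ≤ max (π / (4 * l)) k :=
  stmt7_general l k hl κ hκc hκb
end

section
/- For the rectangle A = (0,a) × (0,b) and Γ = (0,a) × {0}, the function v(x,y) = sin(πx/a)·sinh(π(b−y)/a) is positive on A, harmonic, vanishes on ∂A∖Γ, and satisfies ∂v/∂ν = λ v on Γ with λ = π/(a·tanh(πb/a)). Consequently K(Γ,A) = π/(a·tanh(πb/a)). -/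
open Real Set MeasureTheory

/-- partial derivative in the first coordinate -/
noncomputable def pdX (v : ℝ × ℝ → ℝ) (p : ℝ × ℝ) : ℝ := deriv (fun a => v (a, p.2)) p.1

/-- partial derivative in the second coordinate -/
noncomputable def pdY (v : ℝ × ℝ → ℝ) (p : ℝ × ℝ) : ℝ := deriv (fun b => v (p.1, b)) p.2

/-- Dirichlet energy `∫_A |∇v|²` -/
noncomputable def energy (A : Set (ℝ × ℝ)) (v : ℝ × ℝ → ℝ) : ℝ :=
  ∫ p in A, ((pdX v p) ^ 2 + (pdY v p) ^ 2)

/-- boundary integral `∫_Γ v² dH¹` -/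
noncomputable def bInt (Γ : Set (ℝ × ℝ)) (v : ℝ × ℝ → ℝ) : ℝ :=
  ∫ p in Γ, (v p) ^ 2 ∂(μH[1])

/-- admissible competitors for the variational problem defining `K(Γ,A)`:
`v ∈ H¹(A)`, `∫_Γ v² dH¹ = 1`, `v = 0` on `∂A∖Γ` -/
def Adm (A Γ : Set (ℝ × ℝ)) : Set ((ℝ × ℝ) → ℝ) :=
  {v | ContinuousOn v (closure A) ∧ DifferentiableOn ℝ v A ∧
    MeasureTheory.IntegrableOn (fun p => (pdX v p) ^ 2 + (pdY v p) ^ 2) A ∧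
    bInt Γ v = 1 ∧ ∀ p ∈ frontier A \ Γ, v p = 0}

/-- the quantity `K(Γ,A)` of the paper -/
noncomputable def Kconst (Γ A : Set (ℝ × ℝ)) : ℝ := sInf (energy A '' Adm A Γ)

/-- a planar open set has Lipschitz boundary: near each boundary point, after a
rotation, the set is the open region above the graph of a Lipschitz function -/
def HasLipschitzBoundary (A : Set (ℝ × ℝ)) : Prop :=
  ∀ p ∈ frontier A, ∃ (θ : ℝ) (g : ℝ → ℝ) (L r : ℝ), 0 < r ∧
    LipschitzWith (Real.toNNReal L) g ∧
    ∀ q ∈ Metric.ball p r,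
      (q ∈ A ↔ g (Real.cos θ * (q.1 - p.1) + Real.sin θ * (q.2 - p.2)) <
        (- Real.sin θ * (q.1 - p.1) + Real.cos θ * (q.2 - p.2)))

/-- Laplacian -/
noncomputable def lap (v : ℝ × ℝ → ℝ) (p : ℝ × ℝ) : ℝ :=
  deriv (fun a => pdX v (a, p.2)) p.1 + deriv (fun b => pdY v (p.1, b)) p.2

/-!
For `K ≤ λ`: the separated harmonic function `v = sin(πx/a) sinh(π(b-y)/a)` vanishes on `∂A ∖ Γ`
and satisfies `-∂ᵧv = λ v` on `Γ`, so Green's formula gives `∫_A |∇v|² = λ ∫_Γ v²`, and `v`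
normalised in `L²(Γ)` is an admissible competitor of energy `λ`.

For `K ≥ λ`: if `g₁' = -σ - g₁²` and `g₂' = σ - g₂²` (logarithmic derivatives of separated
solutions of `Δφ = 0`), expanding `(∂ₓw - w g₁)² + (∂ᵧw - w g₂)² ≥ 0` gives
`|∇w|² ≥ ∂ₓ(w² g₁) + ∂ᵧ(w² g₂)`, whose integral over `A` is `-g₂(0) ∫_Γ w²` for every admissible
`w`. With `σ = k²`, `g₁ = -k tan(k(x - a/2))` and `g₂ = -k coth(k(c - y))` are bounded on the
closed rectangle when `k < π/a` and `c > b`, and `-g₂(0) = k coth(kc)` tends to `λ` as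
`k → π/a`, `c → b`.
-/

theorem setIntegral_prod_singleton_hausdorffMeasure_one {E : Type*} [NormedAddCommGroup E]
    [NormedSpace ℝ E] (s : Set ℝ) (c : ℝ) (f : ℝ × ℝ → E) :
    ∫ p in s ×ˢ {c}, f p ∂μH[1] = ∫ x in s, f (x, c) := by
  have hiso : Isometry fun x : ℝ => (x, c) :=
    Isometry.of_dist_eq fun x y => by simp [Prod.dist_eq]
  have hemb := hiso.isClosedEmbedding.measurableEmbedding
  have himg : s ×ˢ {c} = (fun x : ℝ => (x, c)) '' s := by
    ext ⟨x, y⟩; simp [eq_comm]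
  rw [himg, ← Measure.restrict_restrict_of_subset (image_subset_range _ _),
    ← hiso.map_hausdorffMeasure (Or.inl zero_le_one), hemb.restrict_map,
    hemb.injective.preimage_image, hemb.integral_map, hausdorffMeasure_real]

section PartialDerivatives

variable {v : ℝ × ℝ → ℝ} {p : ℝ × ℝ}

theorem DifferentiableAt.hasDerivAt_fderiv_fst (h : DifferentiableAt ℝ v p) :
    HasDerivAt (fun x => v (x, p.2)) (fderiv ℝ v p (1, 0)) p.1 :=
  h.hasFDerivAt.comp_hasDerivAt p.1 ((hasDerivAt_id p.1).prodMk (hasDerivAt_const p.1 p.2))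

theorem DifferentiableAt.hasDerivAt_fderiv_snd (h : DifferentiableAt ℝ v p) :
    HasDerivAt (fun y => v (p.1, y)) (fderiv ℝ v p (0, 1)) p.2 :=
  h.hasFDerivAt.comp_hasDerivAt p.2 ((hasDerivAt_const p.2 p.1).prodMk (hasDerivAt_id p.2))

theorem DifferentiableAt.pdX_eq_fderiv (h : DifferentiableAt ℝ v p) :
    pdX v p = fderiv ℝ v p (1, 0) :=
  h.hasDerivAt_fderiv_fst.deriv

theorem DifferentiableAt.pdY_eq_fderiv (h : DifferentiableAt ℝ v p) :
    pdY v p = fderiv ℝ v p (0, 1) :=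
  h.hasDerivAt_fderiv_snd.deriv

theorem DifferentiableAt.hasDerivAt_pdX (h : DifferentiableAt ℝ v p) :
    HasDerivAt (fun x => v (x, p.2)) (pdX v p) p.1 :=
  h.pdX_eq_fderiv ▸ h.hasDerivAt_fderiv_fst

theorem DifferentiableAt.hasDerivAt_pdY (h : DifferentiableAt ℝ v p) :
    HasDerivAt (fun y => v (p.1, y)) (pdY v p) p.2 :=
  h.pdY_eq_fderiv ▸ h.hasDerivAt_fderiv_snd

theorem DifferentiableOn.aestronglyMeasurable_pdX {U : Set (ℝ × ℝ)} (hU : IsOpen U)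
    (hv : DifferentiableOn ℝ v U) : AEStronglyMeasurable (pdX v) (volume.restrict U) := by
  refine (measurable_fderiv_apply_const ℝ v (1, 0)).aestronglyMeasurable.congr ?_
  filter_upwards [ae_restrict_mem hU.measurableSet] with p hp
  exact ((hv.differentiableAt (hU.mem_nhds hp)).pdX_eq_fderiv).symm

theorem DifferentiableOn.aestronglyMeasurable_pdY {U : Set (ℝ × ℝ)} (hU : IsOpen U)
    (hv : DifferentiableOn ℝ v U) : AEStronglyMeasurable (pdY v) (volume.restrict U) := by
  refine (measurable_fderiv_apply_const ℝ v (0, 1)).aestronglyMeasurable.congr ?_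
  filter_upwards [ae_restrict_mem hU.measurableSet] with p hp
  exact ((hv.differentiableAt (hU.mem_nhds hp)).pdY_eq_fderiv).symm

theorem pdX_const_mul (t : ℝ) (v : ℝ × ℝ → ℝ) (p : ℝ × ℝ) :
    pdX (fun q => t * v q) p = t * pdX v p :=
  deriv_const_mul_field t

theorem pdY_const_mul (t : ℝ) (v : ℝ × ℝ → ℝ) (p : ℝ × ℝ) :
    pdY (fun q => t * v q) p = t * pdY v p :=
  deriv_const_mul_field t

end PartialDerivatives

theorem integral_Ioo_eq_sub_of_hasDerivAt {f f' : ℝ → ℝ} {a b : ℝ} (hab : a ≤ b)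
    (hf : ContinuousOn f (Icc a b)) (hff' : ∀ x ∈ Ioo a b, HasDerivAt f (f' x) x)
    (hf' : IntegrableOn f' (Ioo a b)) :
    ∫ x in Ioo a b, f' x = f b - f a := by
  rw [← integral_Ioc_eq_integral_Ioo, ← intervalIntegral.integral_of_le hab]
  exact intervalIntegral.integral_eq_sub_of_hasDerivAt_of_le hab hf hff'
    ((intervalIntegrable_iff_integrableOn_Ioo_of_le hab).2 hf')

section Rectangle

variable {a₁ a₂ b₁ b₂ : ℝ} {F P : ℝ × ℝ → ℝ}

theorem setIntegral_Ioo_prod_Ioo_of_hasDerivAt_fst (ha : a₁ ≤ a₂)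
    (hP : IntegrableOn P (Ioo a₁ a₂ ×ˢ Ioo b₁ b₂))
    (hF : ∀ y ∈ Ioo b₁ b₂, ContinuousOn (fun x => F (x, y)) (Icc a₁ a₂))
    (hFP : ∀ y ∈ Ioo b₁ b₂, ∀ x ∈ Ioo a₁ a₂, HasDerivAt (fun x => F (x, y)) (P (x, y)) x) :
    ∫ p in Ioo a₁ a₂ ×ˢ Ioo b₁ b₂, P p = ∫ y in Ioo b₁ b₂, (F (a₂, y) - F (a₁, y)) := by
  rw [IntegrableOn, Measure.volume_eq_prod, ← Measure.prod_restrict] at hP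
  rw [Measure.volume_eq_prod, ← Measure.prod_restrict, integral_prod_symm P hP]
  refine integral_congr_ae ?_
  filter_upwards [hP.prod_left_ae, ae_restrict_mem measurableSet_Ioo] with y hPy hy
  exact integral_Ioo_eq_sub_of_hasDerivAt ha (hF y hy) (hFP y hy) hPy

theorem setIntegral_Ioo_prod_Ioo_of_hasDerivAt_snd (hb : b₁ ≤ b₂)
    (hP : IntegrableOn P (Ioo a₁ a₂ ×ˢ Ioo b₁ b₂))
    (hF : ∀ x ∈ Ioo a₁ a₂, ContinuousOn (fun y => F (x, y)) (Icc b₁ b₂))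
    (hFP : ∀ x ∈ Ioo a₁ a₂, ∀ y ∈ Ioo b₁ b₂, HasDerivAt (fun y => F (x, y)) (P (x, y)) y) :
    ∫ p in Ioo a₁ a₂ ×ˢ Ioo b₁ b₂, P p = ∫ x in Ioo a₁ a₂, (F (x, b₂) - F (x, b₁)) := by
  rw [IntegrableOn, Measure.volume_eq_prod, ← Measure.prod_restrict] at hP
  rw [Measure.volume_eq_prod, ← Measure.prod_restrict, integral_prod P hP]
  refine integral_congr_ae ?_
  filter_upwards [hP.prod_right_ae, ae_restrict_mem measurableSet_Ioo] with x hPx hx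
  exact integral_Ioo_eq_sub_of_hasDerivAt hb (hF x hx) (hFP x hx) hPx

theorem Continuous.integrableOn_Ioo_prod_Ioo (hP : Continuous P) :
    IntegrableOn P (Ioo a₁ a₂ ×ˢ Ioo b₁ b₂) :=
  (hP.continuousOn.integrableOn_compact (isCompact_Icc.prod isCompact_Icc)).mono_set
    (prod_mono Ioo_subset_Icc_self Ioo_subset_Icc_self)

end Rectangle

theorem frontier_Ioo_prod_Ioo_diff_bottom {a b : ℝ} (ha : 0 < a) (hb : 0 < b) :
    frontier (Ioo 0 a ×ˢ Ioo 0 b) \ Ioo 0 a ×ˢ {0} =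
      {p ∈ Icc 0 a ×ˢ Icc 0 b | p.1 = 0 ∨ p.1 = a ∨ p.2 = b} := by
  ext ⟨x, y⟩
  simp only [frontier_prod_eq, closure_Ioo ha.ne, closure_Ioo hb.ne, frontier_Ioo ha,
    frontier_Ioo hb, mem_sdiff, mem_union, mem_prod, mem_insert_iff, mem_singleton_iff, mem_Icc,
    mem_Ioo, mem_ofPred_eq]
  grind

theorem abs_two_mul_mul_add_sq_mul_le {w u g c W G C : ℝ} (hw : |w| ≤ W) (hg : |g| ≤ G)
    (hc : |c| ≤ C) : |2 * w * u * g + w ^ 2 * c| ≤ u ^ 2 + W ^ 2 * (G ^ 2 + C) := by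
  have hw2 : w ^ 2 ≤ W ^ 2 := sq_le_sq.2 (hw.trans (le_abs_self W))
  have hg2 : g ^ 2 ≤ G ^ 2 := sq_le_sq.2 (hg.trans (le_abs_self G))
  have hwg : |2 * w * u * g| ≤ u ^ 2 + w ^ 2 * g ^ 2 := abs_le.2
    ⟨by nlinarith [sq_nonneg (u + w * g)], by nlinarith [sq_nonneg (u - w * g)]⟩
  have hwc : |w ^ 2 * c| ≤ W ^ 2 * C := by
    rw [abs_mul, abs_sq]
    exact mul_le_mul hw2 hc (abs_nonneg c) (sq_nonneg W)
  calc |2 * w * u * g + w ^ 2 * c| ≤ |2 * w * u * g| + |w ^ 2 * c| := abs_add_le _ _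
    _ ≤ u ^ 2 + w ^ 2 * g ^ 2 + W ^ 2 * C := add_le_add hwg hwc
    _ ≤ u ^ 2 + W ^ 2 * (G ^ 2 + C) := by nlinarith [mul_le_mul hw2 hg2 (sq_nonneg g) (sq_nonneg W)]

theorem integrableOn_two_mul_mul_add_sq_mul {α : Type*} [TopologicalSpace α] [MeasurableSpace α]
    [OpensMeasurableSpace α] {μ : Measure α} [IsFiniteMeasureOnCompacts μ] {s K : Set α}
    (hs : MeasurableSet s) (hK : IsCompact K) (hsK : s ⊆ K) {u w g c E : α → ℝ}
    (hE : IntegrableOn E s μ) (hu : AEStronglyMeasurable u (μ.restrict s))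
    (huE : ∀ p ∈ s, u p ^ 2 ≤ E p) (hw : ContinuousOn w K) (hg : ContinuousOn g K)
    (hc : ContinuousOn c K) :
    IntegrableOn (fun p => 2 * w p * u p * g p + w p ^ 2 * c p) s μ := by
  obtain ⟨W, hW⟩ := hK.exists_bound_of_continuousOn hw
  obtain ⟨G, hG⟩ := hK.exists_bound_of_continuousOn hg
  obtain ⟨C, hC⟩ := hK.exists_bound_of_continuousOn hc
  have hmeas : ∀ {f : α → ℝ}, ContinuousOn f K → AEStronglyMeasurable f (μ.restrict s) :=
    fun hf => (hf.mono hsK).aestronglyMeasurable hs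
  refine Integrable.mono' (hE.add (integrableOn_const
      ((measure_mono hsK).trans_lt hK.measure_lt_top).ne (C := W ^ 2 * (G ^ 2 + C))))
    ((((hmeas hw).const_mul 2).mul hu).mul (hmeas hg) |>.add (((hmeas hw).pow 2).mul (hmeas hc)))
    (ae_restrict_of_forall_mem hs fun p hp => ?_)
  exact (abs_two_mul_mul_add_sq_mul_le (hW p (hsK hp)) (hG p (hsK hp)) (hC p (hsK hp))).trans
    (add_le_add_left (huE p hp) _)

section IntegrationByParts

variable {a₁ a₂ b₁ b₂ : ℝ} {w : ℝ × ℝ → ℝ} {g g' : ℝ → ℝ}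

theorem setIntegral_Ioo_prod_Ioo_sq_mul_fst (ha : a₁ ≤ a₂)
    (hwc : ContinuousOn w (Icc a₁ a₂ ×ˢ Icc b₁ b₂))
    (hwd : DifferentiableOn ℝ w (Ioo a₁ a₂ ×ˢ Ioo b₁ b₂))
    (hg : ContinuousOn g (Icc a₁ a₂)) (hg' : ∀ x ∈ Ioo a₁ a₂, HasDerivAt g (g' x) x)
    (hP : IntegrableOn (fun p => 2 * w p * pdX w p * g p.1 + w p ^ 2 * g' p.1)
      (Ioo a₁ a₂ ×ˢ Ioo b₁ b₂)) :
    ∫ p in Ioo a₁ a₂ ×ˢ Ioo b₁ b₂, (2 * w p * pdX w p * g p.1 + w p ^ 2 * g' p.1) =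
      ∫ y in Ioo b₁ b₂, (w (a₂, y) ^ 2 * g a₂ - w (a₁, y) ^ 2 * g a₁) :=
  setIntegral_Ioo_prod_Ioo_of_hasDerivAt_fst (F := fun p => w p ^ 2 * g p.1) ha hP
    (fun y hy => ((hwc.comp (by fun_prop) fun x hx => ⟨hx, Ioo_subset_Icc_self hy⟩).pow 2).mul hg)
    fun y hy x hx =>
      (((hwd.differentiableAt (isOpen_Ioo.prod isOpen_Ioo |>.mem_nhds
        (show (x, y) ∈ _ from ⟨hx, hy⟩))).hasDerivAt_pdX.pow 2).mul (hg' x hx)).congr_deriv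
        (by simp only [Pi.pow_apply]; ring)

theorem setIntegral_Ioo_prod_Ioo_sq_mul_snd (hb : b₁ ≤ b₂)
    (hwc : ContinuousOn w (Icc a₁ a₂ ×ˢ Icc b₁ b₂))
    (hwd : DifferentiableOn ℝ w (Ioo a₁ a₂ ×ˢ Ioo b₁ b₂))
    (hg : ContinuousOn g (Icc b₁ b₂)) (hg' : ∀ y ∈ Ioo b₁ b₂, HasDerivAt g (g' y) y)
    (hP : IntegrableOn (fun p => 2 * w p * pdY w p * g p.2 + w p ^ 2 * g' p.2)
      (Ioo a₁ a₂ ×ˢ Ioo b₁ b₂)) :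
    ∫ p in Ioo a₁ a₂ ×ˢ Ioo b₁ b₂, (2 * w p * pdY w p * g p.2 + w p ^ 2 * g' p.2) =
      ∫ x in Ioo a₁ a₂, (w (x, b₂) ^ 2 * g b₂ - w (x, b₁) ^ 2 * g b₁) :=
  setIntegral_Ioo_prod_Ioo_of_hasDerivAt_snd (F := fun p => w p ^ 2 * g p.2) hb hP
    (fun x hx => ((hwc.comp (by fun_prop) fun y hy => ⟨Ioo_subset_Icc_self hx, hy⟩).pow 2).mul hg)
    fun x hx y hy =>
      (((hwd.differentiableAt (isOpen_Ioo.prod isOpen_Ioo |>.mem_nhds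
        (show (x, y) ∈ _ from ⟨hx, hy⟩))).hasDerivAt_pdY.pow 2).mul (hg' y hy)).congr_deriv
        (by simp only [Pi.pow_apply]; ring)

end IntegrationByParts

theorem le_energy_of_riccati {a b σ : ℝ} (ha : 0 < a) (hb : 0 < b) {w : ℝ × ℝ → ℝ}
    (hw : w ∈ Adm (Ioo 0 a ×ˢ Ioo 0 b) (Ioo 0 a ×ˢ {0})) {g₁ g₂ : ℝ → ℝ}
    (hg₁ : ContinuousOn g₁ (Icc 0 a)) (hg₁' : ∀ x ∈ Ioo 0 a, HasDerivAt g₁ (-σ - g₁ x ^ 2) x)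
    (hg₂ : ContinuousOn g₂ (Icc 0 b)) (hg₂' : ∀ y ∈ Ioo 0 b, HasDerivAt g₂ (σ - g₂ y ^ 2) y) :
    -g₂ 0 ≤ energy (Ioo 0 a ×ˢ Ioo 0 b) w := by
  obtain ⟨hwc, hwd, hwi, hwΓ, hw0⟩ := hw
  have hA : IsOpen (Ioo (0 : ℝ) a ×ˢ Ioo 0 b) := isOpen_Ioo.prod isOpen_Ioo
  have hAK : Ioo (0 : ℝ) a ×ˢ Ioo 0 b ⊆ Icc 0 a ×ˢ Icc 0 b :=
    prod_mono Ioo_subset_Icc_self Ioo_subset_Icc_self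
  rw [closure_prod_eq, closure_Ioo ha.ne, closure_Ioo hb.ne] at hwc
  rw [frontier_Ioo_prod_Ioo_diff_bottom ha hb] at hw0
  rw [bInt, setIntegral_prod_singleton_hausdorffMeasure_one] at hwΓ
  have hg₁K : ContinuousOn (fun p : ℝ × ℝ => g₁ p.1) (Icc 0 a ×ˢ Icc 0 b) :=
    hg₁.comp continuousOn_fst fun p hp => hp.1
  have hg₂K : ContinuousOn (fun p : ℝ × ℝ => g₂ p.2) (Icc 0 a ×ˢ Icc 0 b) :=
    hg₂.comp continuousOn_snd fun p hp => hp.2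
  have hP₁ : IntegrableOn (fun p => 2 * w p * pdX w p * g₁ p.1 + w p ^ 2 * (-σ - g₁ p.1 ^ 2))
      (Ioo 0 a ×ˢ Ioo 0 b) :=
    integrableOn_two_mul_mul_add_sq_mul hA.measurableSet (isCompact_Icc.prod isCompact_Icc) hAK
      hwi (hwd.aestronglyMeasurable_pdX hA) (fun p _ => le_add_of_nonneg_right (sq_nonneg _))
      hwc hg₁K (continuousOn_const.sub (hg₁K.pow 2))
  have hP₂ : IntegrableOn (fun p => 2 * w p * pdY w p * g₂ p.2 + w p ^ 2 * (σ - g₂ p.2 ^ 2))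
      (Ioo 0 a ×ˢ Ioo 0 b) :=
    integrableOn_two_mul_mul_add_sq_mul hA.measurableSet (isCompact_Icc.prod isCompact_Icc) hAK
      hwi (hwd.aestronglyMeasurable_pdY hA) (fun p _ => le_add_of_nonneg_left (sq_nonneg _))
      hwc hg₂K (continuousOn_const.sub (hg₂K.pow 2))
  have h₁ : ∫ p in Ioo 0 a ×ˢ Ioo 0 b,
      (2 * w p * pdX w p * g₁ p.1 + w p ^ 2 * (-σ - g₁ p.1 ^ 2)) = 0 := by
    rw [setIntegral_Ioo_prod_Ioo_sq_mul_fst ha.le hwc hwd hg₁ hg₁' hP₁]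
    refine setIntegral_eq_zero_of_forall_eq_zero fun y hy => ?_
    rw [hw0 (0, y) ⟨⟨⟨le_rfl, ha.le⟩, Ioo_subset_Icc_self hy⟩, Or.inl rfl⟩,
      hw0 (a, y) ⟨⟨⟨ha.le, le_rfl⟩, Ioo_subset_Icc_self hy⟩, Or.inr (Or.inl rfl)⟩]
    ring
  have h₂ : ∫ p in Ioo 0 a ×ˢ Ioo 0 b,
      (2 * w p * pdY w p * g₂ p.2 + w p ^ 2 * (σ - g₂ p.2 ^ 2)) = -g₂ 0 := by
    rw [setIntegral_Ioo_prod_Ioo_sq_mul_snd hb.le hwc hwd hg₂ hg₂' hP₂, ← mul_one (-g₂ 0), ← hwΓ,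
      ← integral_const_mul]
    refine setIntegral_congr_fun measurableSet_Ioo fun x hx => ?_
    simp only [hw0 (x, b) ⟨⟨Ioo_subset_Icc_self hx, hb.le, le_rfl⟩, Or.inr (Or.inr rfl)⟩]
    ring
  calc -g₂ 0 = ∫ p in Ioo 0 a ×ˢ Ioo 0 b,
        ((2 * w p * pdX w p * g₁ p.1 + w p ^ 2 * (-σ - g₁ p.1 ^ 2)) +
          (2 * w p * pdY w p * g₂ p.2 + w p ^ 2 * (σ - g₂ p.2 ^ 2))) := by
        rw [integral_add hP₁ hP₂, h₁, h₂, zero_add]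
    _ ≤ energy (Ioo 0 a ×ˢ Ioo 0 b) w :=
        setIntegral_mono_on (hP₁.add hP₂) hwi hA.measurableSet fun p _ => by
          nlinarith [sq_nonneg (pdX w p - w p * g₁ p.1), sq_nonneg (pdY w p - w p * g₂ p.2)]

theorem hasDerivAt_neg_mul_tan {k c x : ℝ} (hx : cos (k * (x - c)) ≠ 0) :
    HasDerivAt (fun x => -k * tan (k * (x - c))) (-k ^ 2 - (-k * tan (k * (x - c))) ^ 2) x := by
  refine (((hasDerivAt_tan hx).comp x (((hasDerivAt_id' x).sub_const c).const_mul k)).const_mul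
    (-k)).congr_deriv ?_
  rw [tan_eq_sin_div_cos]
  field_simp
  linear_combination k ^ 2 * sin_sq_add_cos_sq (k * (x - c))

theorem hasDerivAt_neg_mul_coth {k c y : ℝ} (hy : sinh (k * (c - y)) ≠ 0) :
    HasDerivAt (fun y => -k * (cosh (k * (c - y)) / sinh (k * (c - y))))
      (k ^ 2 - (-k * (cosh (k * (c - y)) / sinh (k * (c - y)))) ^ 2) y := by
  have hin := ((hasDerivAt_id' y).const_sub c).const_mul k
  refine ((hin.cosh.div hin.sinh hy).const_mul (-k)).congr_deriv ?_
  field_simp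
  ring

theorem mul_cosh_div_sinh_le_energy {a b k c : ℝ} (ha : 0 < a) (hb : 0 < b) {w : ℝ × ℝ → ℝ}
    (hw : w ∈ Adm (Ioo 0 a ×ˢ Ioo 0 b) (Ioo 0 a ×ˢ {0})) (hk : 0 < k) (hka : k * a < π)
    (hbc : b < c) :
    k * (cosh (k * c) / sinh (k * c)) ≤ energy (Ioo 0 a ×ˢ Ioo 0 b) w := by
  have hcos : ∀ x ∈ Icc 0 a, cos (k * (x - a / 2)) ≠ 0 := fun x hx =>
    (cos_pos_of_mem_Ioo ⟨by nlinarith [hx.1], by nlinarith [hx.2]⟩).ne'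
  have hsinh : ∀ y ∈ Icc 0 b, sinh (k * (c - y)) ≠ 0 := fun y hy =>
    (sinh_pos_iff.2 (mul_pos hk (by linarith [hy.2]))).ne'
  simpa using le_energy_of_riccati (σ := k ^ 2) ha hb hw
    (fun x hx => (hasDerivAt_neg_mul_tan (hcos x hx)).continuousAt.continuousWithinAt)
    (fun x hx => hasDerivAt_neg_mul_tan (hcos x (Ioo_subset_Icc_self hx)))
    (fun y hy => (hasDerivAt_neg_mul_coth (hsinh y hy)).continuousAt.continuousWithinAt)
    (fun y hy => hasDerivAt_neg_mul_coth (hsinh y (Ioo_subset_Icc_self hy)))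

theorem le_energy_of_mem_Adm {a b : ℝ} (ha : 0 < a) (hb : 0 < b) {w : ℝ × ℝ → ℝ}
    (hw : w ∈ Adm (Ioo 0 a ×ˢ Ioo 0 b) (Ioo 0 a ×ˢ {0})) :
    π / (a * tanh (π * b / a)) ≤ energy (Ioo 0 a ×ˢ Ioo 0 b) w := by
  set f : ℝ → ℝ := fun ε =>
    π / (a + ε) * (cosh (π / (a + ε) * (b + ε)) / sinh (π / (a + ε) * (b + ε)))
  have hsinh : sinh (π * b / a) ≠ 0 := (sinh_pos_iff.2 (by positivity)).ne'
  have hf0 : f 0 = π / (a * tanh (π * b / a)) := by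
    simp only [f, add_zero, tanh_eq_sinh_div_cosh, ← mul_div_right_comm]
    field_simp
  have hf : ContinuousAt f 0 := by
    have ha0 : a + 0 ≠ 0 := by simpa using ha.ne'
    have hs0 : sinh (π / (a + 0) * (b + 0)) ≠ 0 := by simpa [mul_div_right_comm] using hsinh
    fun_prop (disch := assumption)
  refine hf0 ▸ le_of_tendsto (hf.continuousWithinAt (s := Ioi 0))
    (eventually_nhdsWithin_of_forall fun ε (hε : 0 < ε) => mul_cosh_div_sinh_le_energy ha hb hw
      (by positivity) ?_ (by linarith))
  rw [div_mul_eq_mul_div, div_lt_iff₀ (by positivity)]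
  nlinarith [pi_pos]

noncomputable def steklovFn (a b : ℝ) : ℝ × ℝ → ℝ :=
  fun p => sin (π * p.1 / a) * sinh (π * (b - p.2) / a)

section SteklovFn

variable (a b : ℝ)

theorem hasDerivAt_steklovFn_fst (p : ℝ × ℝ) :
    HasDerivAt (fun x => steklovFn a b (x, p.2))
      (π / a * cos (π * p.1 / a) * sinh (π * (b - p.2) / a)) p.1 :=
  ((((hasDerivAt_id' p.1).const_mul π).div_const a).sin.mul_const
    (sinh (π * (b - p.2) / a))).congr_deriv (by ring)

theorem hasDerivAt_steklovFn_snd (p : ℝ × ℝ) :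
    HasDerivAt (fun y => steklovFn a b (p.1, y))
      (-(π / a) * sin (π * p.1 / a) * cosh (π * (b - p.2) / a)) p.2 :=
  ((((((hasDerivAt_id' p.2).const_sub b).const_mul π).div_const a).sinh).const_mul
    (sin (π * p.1 / a))).congr_deriv (by ring)

theorem pdX_steklovFn :
    pdX (steklovFn a b) = fun p => π / a * cos (π * p.1 / a) * sinh (π * (b - p.2) / a) :=
  funext fun p => (hasDerivAt_steklovFn_fst a b p).deriv

theorem pdY_steklovFn :
    pdY (steklovFn a b) = fun p => -(π / a) * sin (π * p.1 / a) * cosh (π * (b - p.2) / a) :=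
  funext fun p => (hasDerivAt_steklovFn_snd a b p).deriv

theorem hasDerivAt_pdX_steklovFn (p : ℝ × ℝ) :
    HasDerivAt (fun x => pdX (steklovFn a b) (x, p.2)) (-(π / a) ^ 2 * steklovFn a b p) p.1 := by
  rw [pdX_steklovFn]
  exact (((((hasDerivAt_id' p.1).const_mul π).div_const a).cos.const_mul (π / a)).mul_const
    (sinh (π * (b - p.2) / a))).congr_deriv (by rw [steklovFn]; ring)

theorem hasDerivAt_pdY_steklovFn (p : ℝ × ℝ) :
    HasDerivAt (fun y => pdY (steklovFn a b) (p.1, y)) ((π / a) ^ 2 * steklovFn a b p) p.2 := by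
  rw [pdY_steklovFn]
  exact ((((((hasDerivAt_id' p.2).const_sub b).const_mul π).div_const a).cosh).const_mul
    (-(π / a) * sin (π * p.1 / a))).congr_deriv (by rw [steklovFn]; ring)

theorem lap_steklovFn (p : ℝ × ℝ) : lap (steklovFn a b) p = 0 := by
  rw [lap, (hasDerivAt_pdX_steklovFn a b p).deriv, (hasDerivAt_pdY_steklovFn a b p).deriv]
  ring

theorem differentiable_steklovFn : Differentiable ℝ (steklovFn a b) := by
  unfold steklovFn; fun_prop

theorem continuous_steklovFn : Continuous (steklovFn a b) :=
  (differentiable_steklovFn a b).continuous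

theorem continuous_pdX_steklovFn : Continuous (pdX (steklovFn a b)) := by
  rw [pdX_steklovFn]; fun_prop

theorem continuous_pdY_steklovFn : Continuous (pdY (steklovFn a b)) := by
  rw [pdY_steklovFn]; fun_prop

end SteklovFn

section Normalization

variable {A Γ : Set (ℝ × ℝ)} {v : ℝ × ℝ → ℝ}

theorem energy_const_mul (t : ℝ) :
    energy A (fun q => t * v q) = t ^ 2 * energy A v := by
  simp only [energy, pdX_const_mul, pdY_const_mul, mul_pow, ← mul_add, integral_const_mul]

theorem bInt_const_mul (t : ℝ) :
    bInt Γ (fun q => t * v q) = t ^ 2 * bInt Γ v := by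
  simp only [bInt, mul_pow, integral_const_mul]

theorem exists_mem_Adm_energy_eq_div (hv : ContinuousOn v (closure A))
    (hvd : DifferentiableOn ℝ v A)
    (hvi : IntegrableOn (fun p => pdX v p ^ 2 + pdY v p ^ 2) A)
    (hv0 : ∀ p ∈ frontier A \ Γ, v p = 0) (hΓ : 0 < bInt Γ v) :
    ∃ u ∈ Adm A Γ, energy A u = energy A v / bInt Γ v := by
  set t := (√(bInt Γ v))⁻¹
  have ht : t ^ 2 = (bInt Γ v)⁻¹ := by rw [inv_pow, sq_sqrt hΓ.le]
  refine ⟨fun q => t * v q, ⟨continuousOn_const.mul hv, (differentiableOn_const t).mul hvd, ?_,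
    ?_, fun p hp => by simp [hv0 p hp]⟩, ?_⟩
  · simpa only [IntegrableOn, pdX_const_mul, pdY_const_mul, mul_pow, ← mul_add] using
      hvi.const_mul (t ^ 2)
  · rw [bInt_const_mul, ht, inv_mul_cancel₀ hΓ.ne']
  · rw [energy_const_mul, ht, div_eq_inv_mul]

end Normalization

section SteklovFnRect

variable {a b : ℝ}

theorem steklovFn_pos {p : ℝ × ℝ} (hx : p.1 ∈ Ioo 0 a) (hy : p.2 < b) : 0 < steklovFn a b p := by
  have ha : 0 < a := hx.1.trans hx.2
  refine mul_pos (sin_pos_of_pos_of_lt_pi (by have := hx.1; positivity) ?_)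
    (sinh_pos_iff.2 (div_pos (mul_pos pi_pos (sub_pos.2 hy)) ha))
  rw [div_lt_iff₀ ha]
  exact mul_lt_mul_of_pos_left hx.2 pi_pos

theorem steklovFn_eq_zero_of_mem_frontier_diff (ha : 0 < a) (hb : 0 < b) :
    ∀ p ∈ frontier (Ioo 0 a ×ˢ Ioo 0 b) \ Ioo 0 a ×ˢ {0}, steklovFn a b p = 0 := by
  rw [frontier_Ioo_prod_Ioo_diff_bottom ha hb]
  rintro ⟨x, y⟩ ⟨-, rfl | rfl | rfl⟩ <;> simp [steklovFn, ha.ne']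

theorem neg_pdY_steklovFn_bottom (ha : a ≠ 0) (hb : b ≠ 0) (x : ℝ) :
    -pdY (steklovFn a b) (x, 0) = π / (a * tanh (π * b / a)) * steklovFn a b (x, 0) := by
  have hsinh : sinh (π * b / a) ≠ 0 := by simp [pi_ne_zero, ha, hb]
  simp only [pdY_steklovFn, steklovFn, sub_zero, tanh_eq_sinh_div_cosh]
  field_simp

theorem integral_steklovFn_bottom_sq_pos (ha : 0 < a) (hb : 0 < b) :
    0 < ∫ x in Ioo 0 a, steklovFn a b (x, 0) ^ 2 := by
  rw [← integral_Ioc_eq_integral_Ioo, ← intervalIntegral.integral_of_le ha.le]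
  refine intervalIntegral.intervalIntegral_pos_of_pos_on ?_
    (fun x hx => pow_pos (steklovFn_pos hx hb) 2) ha
  exact (((continuous_steklovFn a b).comp (by fun_prop)).pow 2).intervalIntegrable _ _

theorem energy_steklovFn (ha : 0 < a) (hb : 0 < b) :
    energy (Ioo 0 a ×ˢ Ioo 0 b) (steklovFn a b) =
      π / (a * tanh (π * b / a)) * ∫ x in Ioo 0 a, steklovFn a b (x, 0) ^ 2 := by
  have hv := continuous_steklovFn a b
  have hvx := continuous_pdX_steklovFn a b
  have hvy := continuous_pdY_steklovFn a b
  have hv' := differentiable_steklovFn a b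
  -- `∂ₓ(v ∂ₓv) = (∂ₓv)² - (π/a)² v²` and `∂ᵧ(v ∂ᵧv) = (∂ᵧv)² + (π/a)² v²`, which add up to `|∇v|²`
  have hx : ∫ p in Ioo 0 a ×ˢ Ioo 0 b,
      (pdX (steklovFn a b) p ^ 2 - (π / a) ^ 2 * steklovFn a b p ^ 2) = 0 := by
    rw [setIntegral_Ioo_prod_Ioo_of_hasDerivAt_fst
      (F := fun p => steklovFn a b p * pdX (steklovFn a b) p) ha.le
      (by fun_prop : Continuous _).integrableOn_Ioo_prod_Ioo (fun y _ => by fun_prop)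
      fun y _ x _ => ((hv' (x, y)).hasDerivAt_pdX.mul
        (hasDerivAt_pdX_steklovFn a b (x, y))).congr_deriv (by ring)]
    simp [steklovFn, ha.ne']
  have hy : ∫ p in Ioo 0 a ×ˢ Ioo 0 b,
      (pdY (steklovFn a b) p ^ 2 + (π / a) ^ 2 * steklovFn a b p ^ 2) =
      ∫ x in Ioo 0 a, π / (a * tanh (π * b / a)) * steklovFn a b (x, 0) ^ 2 := by
    rw [setIntegral_Ioo_prod_Ioo_of_hasDerivAt_snd
      (F := fun p => steklovFn a b p * pdY (steklovFn a b) p) hb.le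
      (by fun_prop : Continuous _).integrableOn_Ioo_prod_Ioo (fun x _ => by fun_prop)
      fun x _ y _ => ((hv' (x, y)).hasDerivAt_pdY.mul
        (hasDerivAt_pdY_steklovFn a b (x, y))).congr_deriv (by ring)]
    refine integral_congr_ae (ae_of_all _ fun x => ?_)
    have htop : steklovFn a b (x, b) = 0 := by simp [steklovFn]
    simp only [htop]
    linear_combination steklovFn a b (x, 0) * neg_pdY_steklovFn_bottom ha.ne' hb.ne' x
  calc energy (Ioo 0 a ×ˢ Ioo 0 b) (steklovFn a b)
      = ∫ p in Ioo 0 a ×ˢ Ioo 0 b,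
          ((pdX (steklovFn a b) p ^ 2 - (π / a) ^ 2 * steklovFn a b p ^ 2) +
            (pdY (steklovFn a b) p ^ 2 + (π / a) ^ 2 * steklovFn a b p ^ 2)) := by
        rw [energy]; congr 1; funext p; ring
    _ = _ := by
        rw [integral_add (by fun_prop : Continuous _).integrableOn_Ioo_prod_Ioo
          (by fun_prop : Continuous _).integrableOn_Ioo_prod_Ioo, hx, hy, zero_add,
          integral_const_mul]

theorem exists_mem_Adm_energy_eq (ha : 0 < a) (hb : 0 < b) :
    ∃ u ∈ Adm (Ioo 0 a ×ˢ Ioo 0 b) (Ioo 0 a ×ˢ {0}),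
      energy (Ioo 0 a ×ˢ Ioo 0 b) u = π / (a * tanh (π * b / a)) := by
  have hΓ : bInt (Ioo 0 a ×ˢ {0}) (steklovFn a b) = ∫ x in Ioo 0 a, steklovFn a b (x, 0) ^ 2 :=
    setIntegral_prod_singleton_hausdorffMeasure_one _ _ _
  have hpos := integral_steklovFn_bottom_sq_pos ha hb
  have hvx := continuous_pdX_steklovFn a b
  have hvy := continuous_pdY_steklovFn a b
  obtain ⟨u, hu, he⟩ := exists_mem_Adm_energy_eq_div (continuous_steklovFn a b).continuousOn
    (differentiable_steklovFn a b).differentiableOn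
    (by fun_prop : Continuous _).integrableOn_Ioo_prod_Ioo
    (steklovFn_eq_zero_of_mem_frontier_diff ha hb) (hΓ ▸ hpos)
  exact ⟨u, hu, by rw [he, energy_steklovFn ha hb, hΓ, mul_div_cancel_right₀ _ hpos.ne']⟩

end SteklovFnRect

/-- for the rectangle `A = (0,a)×(0,b)` and `Γ = (0,a)×{0}`, the
function `v(x,y) = sin(πx/a)·sinh(π(b−y)/a)` is positive on `A`, harmonic,
vanishes on `∂A∖Γ`, and satisfies `∂v/∂ν = λ v` on `Γ` (outer normal `(0,-1)`)
with `λ = π/(a·tanh(πb/a))`; consequently `K(Γ,A) = π/(a·tanh(πb/a))`. -/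
theorem stmt13 (a b : ℝ) (ha : 0 < a) (hb : 0 < b) :
    let A : Set (ℝ × ℝ) := Ioo 0 a ×ˢ Ioo 0 b
    let Γ : Set (ℝ × ℝ) := Ioo 0 a ×ˢ ({0} : Set ℝ)
    let v : ℝ × ℝ → ℝ := fun p => Real.sin (π * p.1 / a) * Real.sinh (π * (b - p.2) / a)
    let lam : ℝ := π / (a * Real.tanh (π * b / a))
    (∀ p ∈ A, 0 < v p) ∧
    (∀ p ∈ A, lap v p = 0) ∧
    (∀ p ∈ frontier A \ Γ, v p = 0) ∧
    (∀ x ∈ Ioo (0:ℝ) a, - pdY v (x, 0) = lam * v (x, 0)) ∧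
    Kconst Γ A = lam := by
  intro A Γ v lam
  obtain ⟨u, hu, hu_energy⟩ := exists_mem_Adm_energy_eq ha hb
  exact ⟨fun p hp => steklovFn_pos hp.1 hp.2.2, fun p _ => lap_steklovFn a b p,
    steklovFn_eq_zero_of_mem_frontier_diff ha hb,
    fun x _ => neg_pdY_steklovFn_bottom ha.ne' hb.ne' x,
    IsLeast.csInf_eq ⟨⟨u, hu, hu_energy⟩, fun _ ⟨_, hw, hw_energy⟩ =>
      hw_energy ▸ le_energy_of_mem_Adm ha hb hw⟩⟩
end
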